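/- Far-field asymptotics: letting A = z_M/2 denote the area of the triangular element, r·Φ(r·u) → A as r → ∞, for any fixed unit vector u ∈ ℝ³. Equivalently, Φ(P) = A/|P| + O(1/|P|²) as |P| → ∞. -/

import Mathlib

open MeasureTheory Real Filter Set Topology

/-! Every source point `Q` of the triangle has `‖Q‖ ≤ 1 + z_M`, so by the triangle inequality
`‖P‖ - (1 + z_M) ≤ ‖P - Q‖ ≤ ‖P‖ + (1 + z_M)`. Integrating the kernel over the triangle, whose
area is `z_M / 2`, squeezes `Φ P` between `(z_M / 2) / (‖P‖ ± (1 + z_M))`, and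
`r * (z_M / 2) / (r ± (1 + z_M)) → z_M / 2`. -/

noncomputable def triangleIntegral (a : ℝ) (f : ℝ → ℝ → ℝ) : ℝ :=
  ∫ x in (0:ℝ)..1, ∫ z in (0:ℝ)..(a * x), f x z

section TriangleIntegral

variable {a : ℝ} {f g : ℝ → ℝ → ℝ}

theorem triangleIntegral_congr (ha : 0 ≤ a)
    (h : ∀ x ∈ Icc (0:ℝ) 1, ∀ z ∈ Icc 0 (a * x), f x z = g x z) :
    triangleIntegral a f = triangleIntegral a g := by
  refine intervalIntegral.integral_congr fun x hx => intervalIntegral.integral_congr fun z hz => ?_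
  rw [uIcc_of_le zero_le_one] at hx
  rw [uIcc_of_le (mul_nonneg ha hx.1)] at hz
  exact h x hx z hz

theorem triangleIntegral_mono (ha : 0 ≤ a) (hf : Continuous (Function.uncurry f))
    (hg : Continuous (Function.uncurry g))
    (h : ∀ x ∈ Icc (0:ℝ) 1, ∀ z ∈ Icc 0 (a * x), f x z ≤ g x z) :
    triangleIntegral a f ≤ triangleIntegral a g := by
  have inner_continuous : ∀ {k : ℝ → ℝ → ℝ}, Continuous (Function.uncurry k) →
      Continuous fun x => ∫ z in (0:ℝ)..(a * x), k x z := fun hk =>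
    intervalIntegral.continuous_parametric_intervalIntegral_of_continuous hk (by fun_prop)
  refine intervalIntegral.integral_mono_on zero_le_one
    ((inner_continuous hf).intervalIntegrable _ _) ((inner_continuous hg).intervalIntegrable _ _)
    fun x hx => intervalIntegral.integral_mono_on (mul_nonneg ha hx.1) ?_ ?_ (h x hx)
  · exact (hf.comp (Continuous.prodMk_right x)).intervalIntegrable _ _
  · exact (hg.comp (Continuous.prodMk_right x)).intervalIntegrable _ _

theorem triangleIntegral_const (a c : ℝ) : triangleIntegral a (fun _ _ => c) = a / 2 * c := by
  simp only [triangleIntegral, intervalIntegral.integral_const, sub_zero, smul_eq_mul]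
  rw [intervalIntegral.integral_mul_const, intervalIntegral.integral_const_mul, integral_id]
  ring

end TriangleIntegral

theorem triangleIntegral_inv_dist_mem_Icc {E : Type*} [SeminormedAddCommGroup E] {a C : ℝ}
    (ha : 0 ≤ a) {Q : ℝ → ℝ → E} (hQ : Continuous (Function.uncurry Q))
    (hQC : ∀ x ∈ Icc (0:ℝ) 1, ∀ z ∈ Icc 0 (a * x), ‖Q x z‖ ≤ C) {P : E} (hP : C < ‖P‖) :
    triangleIntegral a (fun x z => 1 / dist P (Q x z)) ∈
      Icc (a / 2 / (‖P‖ + C)) (a / 2 / (‖P‖ - C)) := by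
  have hρ : 0 < ‖P‖ - C := sub_pos.2 hP
  have hdist : ∀ x ∈ Icc (0:ℝ) 1, ∀ z ∈ Icc 0 (a * x),
      ‖P‖ - C ≤ dist P (Q x z) ∧ dist P (Q x z) ≤ ‖P‖ + C := fun x hx z hz => by
    rw [dist_eq_norm]
    have := hQC x hx z hz
    exact ⟨by linarith [norm_sub_norm_le P (Q x z)], by linarith [norm_sub_le P (Q x z)]⟩
  -- clipping the kernel away from `P` makes it continuous without changing it on the triangle
  set k : ℝ → ℝ → ℝ := fun x z => 1 / max (‖P‖ - C) (dist P (Q x z))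
  have hk : Continuous (Function.uncurry k) :=
    continuous_const.div (by fun_prop) fun _ => (lt_max_of_lt_left hρ).ne'
  rw [triangleIntegral_congr ha (g := k) fun x hx z hz => by
      simp only [k, max_eq_right (hdist x hx z hz).1],
    ← mul_one_div (a / 2) (‖P‖ + C), ← mul_one_div (a / 2) (‖P‖ - C),
    ← triangleIntegral_const, ← triangleIntegral_const]
  refine ⟨triangleIntegral_mono ha continuous_const hk fun x hx z hz => ?_,
    triangleIntegral_mono ha hk continuous_const fun x _ z _ => ?_⟩
  · simp only [k, max_eq_right (hdist x hx z hz).1]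
    gcongr
    · linarith [(hdist x hx z hz).1]
    · exact (hdist x hx z hz).2
  · exact one_div_le_one_div_of_le hρ (le_max_left _ _)

theorem dist_point_xz_eq_sqrt (P : EuclideanSpace ℝ (Fin 3)) (x z : ℝ) :
    dist P !₂[x, 0, z] = sqrt ((P 0 - x) ^ 2 + (P 1) ^ 2 + (P 2 - z) ^ 2) := by
  simp [EuclideanSpace.dist_eq, Fin.sum_univ_three, Real.dist_eq, sq_abs]

theorem norm_point_xz_le {a x z : ℝ} (ha : 0 ≤ a) (hx : x ∈ Icc (0:ℝ) 1) (hz : z ∈ Icc 0 (a * x)) :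
    ‖(!₂[x, 0, z] : EuclideanSpace ℝ (Fin 3))‖ ≤ 1 + a := by
  obtain ⟨hx0, hx1⟩ := hx
  obtain ⟨hz0, hza⟩ := hz
  have hzle : z ≤ a := hza.trans (mul_le_of_le_one_right ha hx1)
  have hnorm : ‖(!₂[x, 0, z] : EuclideanSpace ℝ (Fin 3))‖ = sqrt (x ^ 2 + z ^ 2) := by
    simp [EuclideanSpace.norm_eq, Fin.sum_univ_three]
  rw [hnorm, sqrt_le_left (by linarith)]
  nlinarith

theorem tendsto_mul_div_add_atTop (c d : ℝ) :
    Tendsto (fun r : ℝ => r * (c / (r + d))) atTop (𝓝 c) := by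
  have h : Tendsto (fun r : ℝ => c / (1 + d / r)) atTop (𝓝 (c / (1 + 0))) :=
    tendsto_const_nhds.div (tendsto_const_nhds.add (tendsto_const_nhds.div_atTop tendsto_id))
      (by norm_num)
  rw [add_zero, div_one] at h
  refine h.congr' ?_
  filter_upwards [eventually_gt_atTop 0, eventually_gt_atTop (-d)] with r hr hrd
  have : r + d ≠ 0 := by linarith
  field_simp

/-- Far-field asymptotics: r·Φ(r·u) → A = zM/2 (the area of the
triangle) as r → ∞, for any unit vector u. -/
theorem triangle_potential_far_field (zM : ℝ) (hzM : 0 < zM)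
    (Φ : EuclideanSpace ℝ (Fin 3) → ℝ)
    (hΦ : ∀ P, Φ P = ∫ x in (0:ℝ)..1, ∫ z in (0:ℝ)..(zM * x),
        1 / Real.sqrt ((P 0 - x) ^ 2 + (P 1) ^ 2 + (P 2 - z) ^ 2))
    (u : EuclideanSpace ℝ (Fin 3)) (hu : ‖u‖ = 1) :
    Tendsto (fun r : ℝ => r * Φ (r • u)) atTop (nhds (zM / 2)) := by
  have hΦ_dist : ∀ P, Φ P = triangleIntegral zM fun x z => 1 / dist P !₂[x, 0, z] := by
    simp only [hΦ, triangleIntegral, dist_point_xz_eq_sqrt, implies_true]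
  have hbounds : ∀ᶠ r in atTop, r * Φ (r • u) ∈
      Icc (r * (zM / 2 / (r + (1 + zM)))) (r * (zM / 2 / (r - (1 + zM)))) := by
    filter_upwards [eventually_gt_atTop (1 + zM)] with r hr
    have hnorm : ‖r • u‖ = r := by rw [norm_smul_of_nonneg (by linarith), hu, mul_one]
    have h := triangleIntegral_inv_dist_mem_Icc hzM.le (by fun_prop)
      (fun x hx z hz => norm_point_xz_le hzM.le hx hz) (hnorm ▸ hr)
    rw [hnorm, ← hΦ_dist] at h
    have hr0 : 0 ≤ r := by linarith
    exact ⟨mul_le_mul_of_nonneg_left h.1 hr0, mul_le_mul_of_nonneg_left h.2 hr0⟩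
  refine tendsto_of_tendsto_of_tendsto_of_le_of_le' (tendsto_mul_div_add_atTop _ _) ?_
    (hbounds.mono fun _ h => h.1) (hbounds.mono fun _ h => h.2)
  simpa only [sub_eq_add_neg] using tendsto_mul_div_add_atTop (zM / 2) (-(1 + zM))
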